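/- arXiv:2303.12523 — 8 statements merged into one kernel-verified Lean document; each statement's English description precedes it below -/
import Mathlib

section
/- Let p ∈ A be m-adequate for some integer m ≥ 1, and let b = ∏_{k=0}^{m−1} p_k be the product of the iterates p_k = T^k(z) for 0 ≤ k < m. Then a polynomial F ∈ A satisfies TF = F if and only if F has the form F = G(b) for some polynomial G ∈ R[y] (a polynomial in one variable y with coefficients in R = K[x₁,…,xₙ]). -/
open Polynomial

lemma aeval_aeval' {R : Type*} [CommSemiring R] (s t : R[X]) (F : R[X]) :
    Polynomial.aeval s (Polynomial.aeval t F) = Polynomial.aeval (Polynomial.aeval s t) F :=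
  (aeval_algHom_apply (Polynomial.aeval s) t F).symm

lemma coeff_aeval_C_mul_X {R : Type*} [CommRing R] (a : R) (H : R[X]) (i : ℕ) :
    (Polynomial.aeval (C a * X) H).coeff i = a ^ i * H.coeff i := by
  induction H using Polynomial.induction_on' with
  | add p q hp hq => simp [hp, hq, mul_add]
  | monomial k r =>
      simp only [aeval_monomial, coeff_monomial, algebraMap_eq, mul_pow, ← C_pow, ← mul_assoc,
        ← C_mul, coeff_C_mul, coeff_X_pow]
      by_cases h : i = k
      · subst h; simp [mul_comm]
      · simp [h, Ne.symm h]

lemma exists_aeval_X_pow {R : Type*} [CommRing R] {m : ℕ} (hm : 0 < m)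
    {H : R[X]} (hcoeff : ∀ i, ¬ m ∣ i → H.coeff i = 0) :
    ∃ G : R[X], H = Polynomial.aeval (X ^ m : R[X]) G := by
  refine ⟨∑ j ∈ Finset.range (H.natDegree + 1), C (H.coeff (m * j)) * X ^ j, ?_⟩
  ext i
  rw [map_sum]
  simp only [map_mul, map_pow, aeval_X, aeval_C, algebraMap_eq, ← pow_mul,
    finset_sum_coeff, coeff_C_mul, coeff_X_pow]
  by_cases hdvd : m ∣ i
  · obtain ⟨j0, rfl⟩ := hdvd
    rw [Finset.sum_eq_single j0]
    · simp
    · intro j _ hj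
      rw [if_neg, mul_zero]
      exact fun h => hj (Nat.eq_of_mul_eq_mul_left hm h.symm)
    · intro h
      rw [Finset.mem_range, not_lt] at h
      rw [if_pos rfl, mul_one]
      exact coeff_eq_zero_of_natDegree_lt (lt_of_lt_of_le (Nat.lt_of_lt_of_le
        (Nat.lt_succ_of_le le_rfl) h) (Nat.le_mul_of_pos_left j0 hm))
  · rw [hcoeff i hdvd, Finset.sum_eq_zero]
    intro j _
    rw [if_neg, mul_zero]
    exact fun h => hdvd ⟨j, h⟩

/-- **Theorem (§3).** Let `p` be `m`-adequate for some `m ≥ 1`, and let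
`b = ∏_{k=0}^{m-1} p_k` where `p_k = T^k(z)`.  A polynomial `F` is invariant
under `T` (i.e. `TF = F`) if and only if `F = G(b)` for some `G ∈ R[y]`,
`R = K[x₁,…,xₙ]`. -/
theorem granville_variation_main
    {K : Type*} [Field K] {n : ℕ} (hn : 1 ≤ n)
    (p : Polynomial (MvPolynomial (Fin n) K))
    (m : ℕ) (hm : 1 ≤ m)
    (hadeq : (m = 1 ∧ p = X) ∨
      (1 < m ∧ ∃ (q : K) (r : MvPolynomial (Fin n) K),
        IsPrimitiveRoot q m ∧ p = C (MvPolynomial.C q) * X + C r))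
    (b : Polynomial (MvPolynomial (Fin n) K))
    (hb : b = ∏ k ∈ Finset.range m, (⇑(Polynomial.aeval p))^[k] X)
    (F : Polynomial (MvPolynomial (Fin n) K)) :
    Polynomial.aeval p F = F ↔
      ∃ G : Polynomial (MvPolynomial (Fin n) K), F = Polynomial.aeval b G := by
  rcases hadeq with ⟨hm1, hp⟩ | ⟨hm1, q, r, hq, hp⟩
  · -- m = 1, p = X
    subst hm1
    subst hp
    have hbX : b = X := by simpa using hb
    constructor
    · intro _
      exact ⟨F, by rw [hbX, aeval_X_left_apply]⟩
    · intro _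
      exact aeval_X_left_apply F
  · -- m > 1
    have hm0 : 0 < m := hm
    have hq0 : q ≠ 0 := hq.ne_zero (by omega)
    have hq1 : q - 1 ≠ 0 := sub_ne_zero.mpr (hq.ne_one hm1)
    set γ : MvPolynomial (Fin n) K := MvPolynomial.C q with hγ
    set c : MvPolynomial (Fin n) K := MvPolynomial.C (q - 1)⁻¹ * r with hcdef
    have hone : (MvPolynomial.C (q - 1) : MvPolynomial (Fin n) K)
        * MvPolynomial.C (q - 1)⁻¹ = 1 := by
      rw [← MvPolynomial.C_mul, mul_inv_cancel₀ hq1, MvPolynomial.C_1]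
    have hgc : γ * c = r + c := by
      have : (γ - 1) * c = r := by
        rw [hγ, hcdef, ← mul_assoc]
        rw [show (MvPolynomial.C q - 1 : MvPolynomial (Fin n) K)
            = MvPolynomial.C (q - 1) by rw [MvPolynomial.C_sub, MvPolynomial.C_1]]
        rw [hone, one_mul]
      rw [← this]; ring
    have hpw : Polynomial.aeval p (X + C c) = C γ * (X + C c) := by
      rw [map_add, aeval_X, aeval_C, algebraMap_eq, hp, mul_add, ← C_mul, hgc, map_add]
      ring
    have hit : ∀ k, (⇑(Polynomial.aeval p))^[k] X = C (γ ^ k) * (X + C c) - C c := by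
      intro k
      induction k with
      | zero => simp
      | succ k ih =>
          rw [Function.iterate_succ_apply', ih]
          simp only [map_sub, map_mul, aeval_C, algebraMap_eq, hpw]
          rw [← mul_assoc, ← C_mul, ← pow_succ]
    set δ : MvPolynomial (Fin n) K := MvPolynomial.C q⁻¹ with hδdef
    have hδ : IsPrimitiveRoot δ m :=
      (hq.inv).map_of_injective (MvPolynomial.C_injective _ _)
    have hγδ : ∀ k : ℕ, γ ^ k * δ ^ k = 1 := by
      intro k
      rw [hγ, hδdef, ← map_pow, ← map_pow, ← MvPolynomial.C_mul, ← mul_pow,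
        mul_inv_cancel₀ hq0, one_pow, MvPolynomial.C_1]
    set uK : K := ∏ k ∈ Finset.range m, q ^ k with huK
    have huK0 : uK ≠ 0 := Finset.prod_ne_zero_iff.mpr fun k _ => pow_ne_zero _ hq0
    have hbw : b = C (MvPolynomial.C uK) * ((X + C c) ^ m - C (c ^ m)) := by
      have hprod : ((X : Polynomial (MvPolynomial (Fin n) K)) + C c) ^ m - C (c ^ m)
          = ∏ k ∈ Finset.range m, ((X + C c) - C (δ ^ k * c)) := by
        have base := X_pow_sub_C_eq_prod hδ hm0 (rfl : c ^ m = c ^ m)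
        have h2 := congrArg (Polynomial.aeval
          ((X : Polynomial (MvPolynomial (Fin n) K)) + C c)) base
        simpa only [map_sub, map_pow, map_prod, aeval_X, aeval_C, algebraMap_eq] using h2
      rw [hb]
      calc ∏ k ∈ Finset.range m, (⇑(Polynomial.aeval p))^[k] X
          = ∏ k ∈ Finset.range m, (C (γ ^ k) * ((X + C c) - C (δ ^ k * c))) := by
            refine Finset.prod_congr rfl fun k _ => ?_
            rw [hit k, mul_sub, ← C_mul, ← mul_assoc, hγδ k, one_mul]
        _ = (∏ k ∈ Finset.range m, C (γ ^ k)) *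
              ∏ k ∈ Finset.range m, ((X + C c) - C (δ ^ k * c)) := Finset.prod_mul_distrib
        _ = C (MvPolynomial.C uK) * ((X + C c) ^ m - C (c ^ m)) := by
            rw [← hprod, ← map_prod]
            congr 2
            rw [huK, hγ, map_prod]
            exact Finset.prod_congr rfl fun k _ => (map_pow _ _ _).symm
    have hγm : γ ^ m = 1 := by rw [hγ, ← map_pow, hq.pow_eq_one, MvPolynomial.C_1]
    have hTb : Polynomial.aeval p b = b := by
      conv_lhs => rw [hbw]
      simp only [map_mul, map_sub, map_pow, aeval_C, algebraMap_eq, hpw]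
      rw [mul_pow, ← C_pow, hγm, C_1, one_mul, ← C_pow, ← hbw]
    constructor
    · intro hF
      set H : Polynomial (MvPolynomial (Fin n) K) := Polynomial.aeval (X - C c) F with hHdef
      have hback : Polynomial.aeval (X + C c) H = F := by
        rw [hHdef, aeval_aeval', map_sub, aeval_X, aeval_C, algebraMap_eq,
          add_sub_cancel_right, aeval_X_left_apply]
      have haux : Polynomial.aeval (X - C c) p = C γ * X - C c := by
        rw [hp]
        simp only [map_add, map_mul, map_sub, aeval_X, aeval_C, algebraMap_eq]
        rw [mul_sub, ← C_mul, hgc, map_add]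
        ring
      have hsc : Polynomial.aeval (C γ * X) H = H := by
        rw [hHdef, aeval_aeval', map_sub, aeval_X, aeval_C, algebraMap_eq]
        conv_rhs => rw [← hF]
        rw [aeval_aeval', haux]
      have hcoeff : ∀ i, ¬ m ∣ i → H.coeff i = 0 := by
        intro i hi
        have h1 := congrArg (fun P => P.coeff i) hsc
        simp only [coeff_aeval_C_mul_X] at h1
        have h2 : (γ ^ i - 1) * H.coeff i = 0 := by rw [sub_mul, one_mul, h1, sub_self]
        have hqi : q ^ i ≠ 1 := fun h => hi ((hq.pow_eq_one_iff_dvd i).mp h)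
        have h3 : γ ^ i - 1 ≠ 0 := by
          refine sub_ne_zero.mpr ?_
          rw [hγ, ← map_pow]
          intro h
          exact hqi (MvPolynomial.C_injective _ _ (by rw [h, MvPolynomial.C_1]))
        rcases mul_eq_zero.mp h2 with h | h
        · exact absurd h h3
        · exact h
      obtain ⟨G₀, hG₀⟩ := exists_aeval_X_pow hm0 hcoeff
      have hFw : F = Polynomial.aeval
          (((X : Polynomial (MvPolynomial (Fin n) K)) + C c) ^ m) G₀ := by
        rw [← hback, hG₀, aeval_aeval', map_pow, aeval_X]
      have hbG : Polynomial.aeval b (C (MvPolynomial.C uK⁻¹) * X + C (c ^ m))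
          = (X + C c) ^ m := by
        simp only [map_add, map_mul, aeval_X, aeval_C, algebraMap_eq]
        rw [hbw, ← mul_assoc, ← C_mul, ← MvPolynomial.C_mul, inv_mul_cancel₀ huK0,
          MvPolynomial.C_1, C_1, one_mul]
        ring
      refine ⟨Polynomial.aeval (C (MvPolynomial.C uK⁻¹) * X + C (c ^ m)) G₀, ?_⟩
      rw [aeval_aeval', hbG, hFw]
    · rintro ⟨G, rfl⟩
      rw [aeval_aeval', hTb]
end

section
/- Suppose F ∈ A satisfies TF = F. Then for every k ≥ 0 the polynomial p_k = T^k(z) divides the polynomial W(x,z) := F(x,z) − F(x,0) in A. -/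
open Polynomial

theorem iterate_dvd_of_map_eq_self {M F : Type*} [Semigroup M] [FunLike F M M]
    [MulHomClass F M M] (f : F) {a w : M} (hw : f w = w) (ha : a ∣ w) :
    ∀ k : ℕ, f^[k] a ∣ w
  | 0 => ha
  | k + 1 => by
    rw [Function.iterate_succ_apply', ← hw]
    exact map_dvd f (iterate_dvd_of_map_eq_self f hw ha k)

theorem aeval_sub_C_coeff_zero_of_aeval_eq_self {R : Type*} [CommRing R] {p F : R[X]}
    (hF : aeval p F = F) : aeval p (F - C (F.coeff 0)) = F - C (F.coeff 0) := by
  rw [map_sub, hF, aeval_C, algebraMap_eq]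

theorem granville_variation_lemma1_general
    {K : Type*} [Field K] {n : ℕ}
    (p : Polynomial (MvPolynomial (Fin n) K))
    (F : Polynomial (MvPolynomial (Fin n) K))
    (hF : Polynomial.aeval p F = F) :
    ∀ k : ℕ, (⇑(Polynomial.aeval p))^[k] X ∣ F - C (F.coeff 0) :=
  iterate_dvd_of_map_eq_self (aeval p) (aeval_sub_C_coeff_zero_of_aeval_eq_self hF) X_dvd_sub_C

/-- **Lemma 1.** If `F(x,z)` is invariant under `T` (the `R`-algebra
endomorphism of `A = R[z]` with `T(z) = p`), then each iterate
`p_k = T^k(z)` divides `W(x,z) = F(x,z) - F(x,0)` in `A`. -/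
theorem granville_variation_lemma1
    {K : Type*} [Field K] {n : ℕ} (hn : 1 ≤ n)
    (p : Polynomial (MvPolynomial (Fin n) K))
    (F : Polynomial (MvPolynomial (Fin n) K))
    (hF : Polynomial.aeval p F = F) :
    ∀ k : ℕ, (⇑(Polynomial.aeval p))^[k] X ∣ F - C (F.coeff 0) :=
  granville_variation_lemma1_general p F hF
end

section
/- Let p ∈ A be m-adequate for some integer m ≥ 1, with the linear coefficient r ∈ R nonzero when m > 1, and let b = ∏_{k=0}^{m−1} p_k. If F ∈ A satisfies TF = F, then b divides F(x,z) − F(x,0) in A; moreover, writing F(x,z) − F(x,0) = b·V(x,z), the quotient V satisfies TV = V and d(V) < d(F) whenever d(F) ≥ 1. -/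
/-!
Applying `T^k` to `z ∣ F(x,z) - F(x,0)` gives `p_k ∣ F(x,z) - F(x,0)`. Each `p_k = q^k (z - α_k)`
with `q^k` a unit, and `p_k(α_k) = 0` says that `α_k` is sent to `0` by the `k`-th iterate of the
affine map `w ↦ q w + r`. Hence `α_j = α_k` with `j < k` would force the `(k-j)`-th iterate to fix
`0`, i.e. `r (1 + q + ⋯ + q^(k-j-1)) = 0`, impossible for a primitive root and `r ≠ 0`. So the
`α_k` are distinct roots of `F(x,z) - F(x,0)` over the domain `R`, and `b` divides it. Since
`p_m = z`, `T` permutes the factors of `b` cyclically, so `Tb = b`, and cancelling `b` shows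
`TV = V`; finally `d(b) = m ≥ 1` gives `d(V) < d(F)`.
-/

open Polynomial

namespace Polynomial

variable {R : Type*} [CommRing R]

theorem eval_iterate_aeval_X (p : R[X]) (k : ℕ) (w : R) :
    ((aeval p)^[k] X).eval w = (fun v => p.eval v)^[k] w := by
  induction k generalizing w with
  | zero => simp
  | succ k ih =>
    rw [Function.iterate_succ_apply', ← comp_eq_aeval, eval_comp, ih, Function.iterate_succ_apply]

theorem iterate_aeval_X_dvd {p G : R[X]} (hG : aeval p G = G) (hX : X ∣ G) (k : ℕ) :
    (aeval p)^[k] X ∣ G := by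
  induction k with
  | zero => simpa using hX
  | succ k ih =>
    rw [Function.iterate_succ_apply', ← hG]
    exact _root_.map_dvd (aeval p) ih

theorem aeval_prod_range_iterate_aeval_X {p : R[X]} {m : ℕ} (hperiod : (aeval p)^[m] X = X) :
    aeval p (∏ k ∈ Finset.range m, (aeval p)^[k] X) = ∏ k ∈ Finset.range m, (aeval p)^[k] X := by
  rw [map_prod]
  simp_rw [← Function.iterate_succ_apply' (aeval p)]
  cases m with
  | zero => simp
  | succ m =>
    rw [Finset.prod_range_succ, hperiod, Finset.prod_range_succ' _ m, Function.iterate_zero_apply]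

theorem iterate_aeval_linear_X (a c : R) (k : ℕ) :
    (aeval (C a * X + C c))^[k] X = C (a ^ k) * X + C ((fun v => a * v + c)^[k] 0) := by
  induction k with
  | zero => simp
  | succ k ih =>
    rw [Function.iterate_succ_apply, aeval_X, ← AlgHom.coe_pow, map_add, map_mul, AlgHom.coe_pow,
      ih, Function.iterate_succ_apply']
    simp only [← AlgHom.coe_pow, ← algebraMap_eq, AlgHom.commutes]
    simp only [algebraMap_eq, C_mul, C_add, pow_succ]
    ring

theorem iterate_linear_zero (a c : R) (l : ℕ) :
    (fun v => a * v + c)^[l] 0 = c * ∑ i ∈ Finset.range l, a ^ i := by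
  induction l with
  | zero => simp
  | succ l ih =>
    rw [Function.iterate_succ_apply', ih, geom_sum_succ]
    ring

section Domain

variable [IsDomain R]

theorem prod_X_sub_C_dvd_of_isRoot {G : R[X]} {s : Finset R}
    (h : ∀ a ∈ s, G.IsRoot a) : ∏ a ∈ s, (X - C a) ∣ G := by
  rcases eq_or_ne G 0 with rfl | hG
  · exact dvd_zero _
  rw [Finset.prod_eq_multiset_prod, Multiset.prod_X_sub_C_dvd_iff_le_roots hG,
    Multiset.le_iff_subset s.nodup]
  exact fun a ha => (mem_roots hG).mpr (h a ha)

theorem prod_iterate_aeval_linear_X_dvd {a : R} (ha : IsUnit a) (c : R) {m : ℕ}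
    (horbit : ∀ l, 0 < l → l < m → (fun v => a * v + c)^[l] 0 ≠ 0)
    {G : R[X]} (hG : aeval (C a * X + C c) G = G) (hX : X ∣ G) :
    ∏ k ∈ Finset.range m, (aeval (C a * X + C c))^[k] X ∣ G := by
  obtain ⟨u, rfl⟩ := ha
  set φ : R → R := fun v => ↑u * v + c
  set α : ℕ → R := fun k => -(↑u⁻¹ ^ k * φ^[k] 0)
  have hfactor : ∀ k, (aeval (C (u : R) * X + C c))^[k] X = C ((u : R) ^ k) * (X - C (α k)) := by
    intro k
    have hinv : (u : R) ^ k * ↑u⁻¹ ^ k = 1 := by rw [← mul_pow, Units.mul_inv, one_pow]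
    rw [iterate_aeval_linear_X, mul_sub, ← C_mul, mul_neg, ← mul_assoc, hinv, one_mul, C_neg,
      sub_neg_eq_add]
  have hroot : ∀ k, G.IsRoot (α k) := fun k =>
    dvd_iff_isRoot.mp <| (dvd_mul_left _ _).trans <| hfactor k ▸ iterate_aeval_X_dvd hG hX k
  have hzero : ∀ k, φ^[k] (α k) = 0 := by
    intro k
    have heval := eval_iterate_aeval_X (C (u : R) * X + C c) k (α k)
    rw [hfactor k] at heval
    simpa using heval.symm
  have hinj : Set.InjOn α (Finset.range m) := by
    suffices h : ∀ j k, j < k → k < m → α j ≠ α k by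
      intro j hj k hk hjk
      simp only [Finset.coe_range, Set.mem_Iio] at hj hk
      by_contra hne
      rcases Nat.lt_or_gt_of_ne hne with hlt | hgt
      · exact h j k hlt hk hjk
      · exact h k j hgt hj hjk.symm
    intro j k hjk hk hα
    apply horbit (k - j) (by omega) (by omega)
    calc φ^[k - j] 0 = φ^[k - j] (φ^[j] (α j)) := by rw [hzero j]
      _ = φ^[k] (α k) := by rw [← Function.iterate_add_apply, Nat.sub_add_cancel hjk.le, hα]
      _ = 0 := hzero k
  calc ∏ k ∈ Finset.range m, (aeval (C (u : R) * X + C c))^[k] X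
      = C (∏ k ∈ Finset.range m, (u : R) ^ k) * ∏ k ∈ Finset.range m, (X - C (α k)) := by
        simp only [hfactor, Finset.prod_mul_distrib, map_prod]
    _ ∣ G := by
        classical
        rw [(isUnit_C.mpr (IsUnit.prod_iff.mpr fun k _ => u.isUnit.pow k)).mul_left_dvd,
          ← Finset.prod_image (f := fun a => X - C a) hinj]
        exact prod_X_sub_C_dvd_of_isRoot (by simpa using fun k _ => hroot k)

theorem natDegree_prod_iterate_aeval_linear_X {a : R} (ha : a ≠ 0) (c : R) (m : ℕ) :
    (∏ k ∈ Finset.range m, (aeval (C a * X + C c))^[k] X).natDegree = m := by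
  have hdeg : ∀ k, ((aeval (C a * X + C c))^[k] X).natDegree = 1 := fun k => by
    rw [iterate_aeval_linear_X]
    exact natDegree_linear (pow_ne_zero k ha)
  rw [natDegree_prod _ _ fun k _ => ne_zero_of_natDegree_gt (hdeg k ▸ zero_lt_one)]
  simp [hdeg]

theorem natDegree_lt_of_sub_C_coeff_zero_eq_mul {F b V : R[X]}
    (h : F - C (F.coeff 0) = b * V) (hb : 0 < b.natDegree) (hF : 0 < F.natDegree) :
    V.natDegree < F.natDegree := by
  have hb0 : b ≠ 0 := ne_zero_of_natDegree_gt hb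
  have hV0 : V ≠ 0 := by
    rintro rfl
    have := (natDegree_sub_C (p := F) (a := F.coeff 0)).symm
    rw [h, mul_zero, natDegree_zero] at this
    omega
  have := natDegree_mul hb0 hV0
  rw [← h, natDegree_sub_C] at this
  omega

theorem aeval_eq_self_of_aeval_mul_eq_self {p b V : R[X]} (hb : aeval p b = b)
    (hb0 : b ≠ 0) (hbV : aeval p (b * V) = b * V) : aeval p V = V := by
  rw [map_mul, hb] at hbV
  exact mul_left_cancel₀ hb0 hbV

theorem _root_.IsPrimitiveRoot.iterate_aeval_linear_X_self {ζ : R} {m : ℕ}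
    (hζ : IsPrimitiveRoot ζ m) (hm : 1 < m) (c : R) : (aeval (C ζ * X + C c))^[m] X = X := by
  rw [iterate_aeval_linear_X, iterate_linear_zero, hζ.pow_eq_one, hζ.geom_sum_eq_zero hm]
  simp

theorem _root_.IsPrimitiveRoot.iterate_linear_zero_ne_zero {ζ : R} {m : ℕ}
    (hζ : IsPrimitiveRoot ζ m) {c : R} (hc : c ≠ 0) {l : ℕ} (hl0 : 0 < l) (hlm : l < m) :
    (fun v => ζ * v + c)^[l] 0 ≠ 0 := by
  rw [iterate_linear_zero]
  refine mul_ne_zero hc fun hsum => hζ.pow_ne_one_of_pos_of_lt hl0.ne' hlm ?_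
  rw [← sub_eq_zero, ← geom_sum_mul, hsum, zero_mul]

end Domain

end Polynomial

theorem granville_variation_descent_general
    {K : Type*} [Field K] {n : ℕ}
    (p : Polynomial (MvPolynomial (Fin n) K))
    (m : ℕ)
    (hadeq : (m = 1 ∧ p = X) ∨
      (1 < m ∧ ∃ (q : K) (r : MvPolynomial (Fin n) K),
        IsPrimitiveRoot q m ∧ r ≠ 0 ∧ p = C (MvPolynomial.C q) * X + C r))
    (b : Polynomial (MvPolynomial (Fin n) K))
    (hb : b = ∏ k ∈ Finset.range m, (⇑(Polynomial.aeval p))^[k] X)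
    (F : Polynomial (MvPolynomial (Fin n) K))
    (hF : Polynomial.aeval p F = F) :
    (b ∣ F - C (F.coeff 0)) ∧
      ∀ V : Polynomial (MvPolynomial (Fin n) K),
        F - C (F.coeff 0) = b * V →
          Polynomial.aeval p V = V ∧ (1 ≤ F.natDegree → V.natDegree < F.natDegree) := by
  obtain ⟨a, c, ha, rfl, hm, hperiod, horbit⟩ : ∃ a c, IsUnit a ∧ p = C a * X + C c ∧ 1 ≤ m ∧
      (aeval p)^[m] X = X ∧ ∀ l, 0 < l → l < m → (fun v => a * v + c)^[l] 0 ≠ 0 := by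
    rcases hadeq with ⟨rfl, rfl⟩ | ⟨hm, q, r, hq, hr, rfl⟩
    · exact ⟨1, 0, isUnit_one, by simp, le_rfl, by simp, by omega⟩
    · have hCq := hq.map_of_injective (MvPolynomial.C_injective (Fin n) K)
      exact ⟨_, r, hCq.isUnit (by omega), rfl, hm.le, hCq.iterate_aeval_linear_X_self hm r,
        fun l hl0 hlm => hCq.iterate_linear_zero_ne_zero hr hl0 hlm⟩
  subst hb
  set G := F - C (F.coeff 0)
  have hG : aeval (C a * X + C c) G = G := by rw [map_sub, hF, aeval_C, algebraMap_eq]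
  have hbdeg := natDegree_prod_iterate_aeval_linear_X ha.ne_zero c m
  have hb0 := ne_zero_of_natDegree_gt (n := 0) (hbdeg ▸ hm)
  refine ⟨prod_iterate_aeval_linear_X_dvd ha c horbit hG (X_dvd_iff.mpr (by simp [G])),
    fun V hV => ⟨?_, fun hF1 => natDegree_lt_of_sub_C_coeff_zero_eq_mul hV (by omega) hF1⟩⟩
  rw [hV] at hG
  exact aeval_eq_self_of_aeval_mul_eq_self (aeval_prod_range_iterate_aeval_X hperiod) hb0 hG

/-- If `p` is `m`-adequate (`m ≥ 1`, with `r ≠ 0` when `m > 1`) and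
`b = ∏_{k<m} p_k`, then for every `T`-invariant `F` the polynomial `b`
divides `F(x,z) - F(x,0)`; moreover any quotient `V` with
`F(x,z) - F(x,0) = b·V` is again `T`-invariant and has `d(V) < d(F)`
whenever `d(F) ≥ 1`. -/
theorem granville_variation_descent
    {K : Type*} [Field K] {n : ℕ} (hn : 1 ≤ n)
    (p : Polynomial (MvPolynomial (Fin n) K))
    (m : ℕ) (hm : 1 ≤ m)
    (hadeq : (m = 1 ∧ p = X) ∨
      (1 < m ∧ ∃ (q : K) (r : MvPolynomial (Fin n) K),
        IsPrimitiveRoot q m ∧ r ≠ 0 ∧ p = C (MvPolynomial.C q) * X + C r))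
    (b : Polynomial (MvPolynomial (Fin n) K))
    (hb : b = ∏ k ∈ Finset.range m, (⇑(Polynomial.aeval p))^[k] X)
    (F : Polynomial (MvPolynomial (Fin n) K))
    (hF : Polynomial.aeval p F = F) :
    (b ∣ F - C (F.coeff 0)) ∧
      ∀ V : Polynomial (MvPolynomial (Fin n) K),
        F - C (F.coeff 0) = b * V →
          Polynomial.aeval p V = V ∧ (1 ≤ F.natDegree → V.natDegree < F.natDegree) :=
  granville_variation_descent_general p m hadeq b hb F hF
end

section
/- Suppose p = q·z + r with q ∈ K a primitive m-th root of unity (m > 1) and r ∈ R, r ≠ 0. Then the polynomials p₀, p₁, …, p_{m−1} are pairwise coprime in the sense that for 0 ≤ k < l ≤ m−1, every common divisor of p_k and p_l in A is a unit (a nonzero element of K). -/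
/-!
Iterating the affine map `z ↦ q z + r` gives `p_k = q^k z + (1 + q + ⋯ + q^{k-1}) r`, so
`p_l - q^{l-k} p_k = (1 + q + ⋯ + q^{l-k-1}) r`, which is a nonzero element of `R` because
`q^{l-k} ≠ 1`. A common divisor of `p_k` and `p_l` therefore has degree `0` in `z`, and it divides
the leading coefficient `q^k` of `p_k`, so it is a unit of `R`, i.e. a nonzero constant.
-/

open Polynomial Finset

theorem IsPrimitiveRoot.geom_sum_ne_zero_of_lt {R : Type*} [CommRing R] [IsDomain R] {ζ : R}
    {m d : ℕ} (hζ : IsPrimitiveRoot ζ m) (hd : d ≠ 0) (hdm : d < m) :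
    ∑ i ∈ range d, ζ ^ i ≠ 0 := by
  intro h
  have hgeom := geom_sum_mul ζ d
  rw [h, zero_mul, eq_comm, sub_eq_zero] at hgeom
  exact hζ.pow_ne_one_of_pos_of_lt hd hdm hgeom

namespace Polynomial

variable {R : Type*}

theorem iterate_aeval_C_mul_X_add_C [CommRing R] (a b : R) (k : ℕ) :
    (⇑(aeval (C a * X + C b)))^[k] X = C (a ^ k) * X + C ((∑ i ∈ range k, a ^ i) * b) := by
  induction k with
  | zero => simp
  | succ k ih =>
    rw [Function.iterate_succ_apply', ih]
    simp only [map_add, map_mul, aeval_C, aeval_X, algebraMap_eq, sum_range_succ, pow_succ]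
    ring

theorem iterate_aeval_C_mul_X_add_C_add_sub [CommRing R] (a b : R) (d k : ℕ) :
    (⇑(aeval (C a * X + C b)))^[d + k] X - C (a ^ d) * (⇑(aeval (C a * X + C b)))^[k] X =
      C ((∑ i ∈ range d, a ^ i) * b) := by
  simp only [iterate_aeval_C_mul_X_add_C, sum_range_add, pow_add, ← mul_sum, map_add, map_mul]
  ring

theorem isUnit_of_dvd_C_of_dvd_C_mul_X_add_C [CommRing R] [IsDomain R] {D : R[X]} {c u v : R}
    (hc : c ≠ 0) (hu : IsUnit u) (hDc : D ∣ C c) (hDf : D ∣ C u * X + C v) : IsUnit D := by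
  have hdeg : D.natDegree = 0 := by
    simpa using natDegree_le_of_dvd hDc (C_ne_zero.mpr hc)
  rw [eq_C_of_natDegree_eq_zero hdeg] at hDf ⊢
  have hcoeff : D.coeff 0 ∣ u := by
    simpa using (C_dvd_iff_dvd_coeff _ _).mp hDf 1
  exact isUnit_C.mpr (isUnit_of_dvd_unit hcoeff hu)

theorem exists_eq_C_C_of_isUnit {σ K : Type*} [Field K] {D : (MvPolynomial σ K)[X]}
    (hD : IsUnit D) : ∃ c : K, c ≠ 0 ∧ D = C (MvPolynomial.C c) := by
  obtain ⟨a, ha, rfl⟩ := Polynomial.isUnit_iff.mp hD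
  obtain ⟨c, hc, rfl⟩ := MvPolynomial.isUnit_iff_eq_C_of_isReduced.mp ha
  exact ⟨c, hc.ne_zero, rfl⟩

end Polynomial

theorem granville_variation_pairwise_coprime_general
    {K : Type*} [Field K] {n : ℕ}
    (q : K) (r : MvPolynomial (Fin n) K) (hr : r ≠ 0)
    (m : ℕ) (hq : IsPrimitiveRoot q m)
    (p : Polynomial (MvPolynomial (Fin n) K))
    (hp : p = C (MvPolynomial.C q) * X + C r) :
    ∀ k l : ℕ, k < l → l ≤ m - 1 →
      ∀ D : Polynomial (MvPolynomial (Fin n) K),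
        D ∣ (⇑(Polynomial.aeval p))^[k] X →
        D ∣ (⇑(Polynomial.aeval p))^[l] X →
        ∃ c : K, c ≠ 0 ∧ D = C (MvPolynomial.C c) := by
  subst hp
  intro k l hkl hlm D hDk hDl
  obtain ⟨d, rfl⟩ := Nat.exists_eq_add_of_le' hkl.le
  have hCq := hq.map_of_injective (MvPolynomial.C_injective (Fin n) K)
  have hDconst : D ∣ C ((∑ i ∈ range d, MvPolynomial.C q ^ i) * r) := by
    rw [← iterate_aeval_C_mul_X_add_C_add_sub]
    exact dvd_sub hDl (dvd_mul_of_dvd_right hDk _)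
  rw [iterate_aeval_C_mul_X_add_C] at hDk
  refine exists_eq_C_C_of_isUnit (isUnit_of_dvd_C_of_dvd_C_mul_X_add_C ?_ ?_ hDconst hDk)
  · exact mul_ne_zero (hCq.geom_sum_ne_zero_of_lt (by omega) (by omega)) hr
  · exact (hCq.isUnit (by omega)).pow k

/-- **Remark (§2).** If `p = q·z + r` with `q ∈ K` a primitive `m`-th root
of unity (`m > 1`) and `r ∈ R`, `r ≠ 0`, then the iterates
`p₀, p₁, …, p_{m-1}` are pairwise coprime: for `0 ≤ k < l ≤ m - 1`, any
common divisor of `p_k` and `p_l` in `A` is a nonzero constant of `K`. -/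
theorem granville_variation_pairwise_coprime
    {K : Type*} [Field K] {n : ℕ} (hn : 1 ≤ n)
    (q : K) (r : MvPolynomial (Fin n) K) (hr : r ≠ 0)
    (m : ℕ) (hm : 1 < m) (hq : IsPrimitiveRoot q m)
    (p : Polynomial (MvPolynomial (Fin n) K))
    (hp : p = C (MvPolynomial.C q) * X + C r) :
    ∀ k l : ℕ, k < l → l ≤ m - 1 →
      ∀ D : Polynomial (MvPolynomial (Fin n) K),
        D ∣ (⇑(Polynomial.aeval p))^[k] X →
        D ∣ (⇑(Polynomial.aeval p))^[l] X →
        ∃ c : K, c ≠ 0 ∧ D = C (MvPolynomial.C c) :=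
  granville_variation_pairwise_coprime_general q r hr m hq p hp
end

section
/- (Granville) Let F ∈ ℤ[x,y,z] be a polynomial invariant under the substitution z ↦ −(x+y+z), i.e. F(x, y, −(x+y+z)) = F(x, y, z). Then F can be written as a polynomial in b = z(x+y+z) with coefficients in ℤ[x,y]; that is, there exists G ∈ ℤ[x,y][t] such that F(x,y,z) = G(x, y, z(x+y+z)). -/
/-!
Put `s = x + y`, `σ(z) = -(z + s)` and `b = z (z + s)`, so that `σ` is an involution of
`R[z]` fixing `b`. Divide a `σ`-invariant `f` by the monic quadratic `b`: since `σ` is affine,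
applying it to `f = r + b q` gives another division with remainder, so by uniqueness `q` and
`r` are `σ`-invariant. As `σ` negates the linear coefficient of `r`, which has degree `≤ 1`,
and `R` has no `2`-torsion, `r` is constant. Induction on the degree expands `f` in powers of `b`.
-/

open Polynomial

namespace Polynomial

variable {R : Type*} [CommRing R]

theorem divByMonic_comp_eq_and_modByMonic_comp_eq {f g σ : R[X]} (hg : g.Monic)
    (hσ : σ.natDegree ≤ 1) (hgσ : g.comp σ = g) (hfσ : f.comp σ = f) :
    (f /ₘ g).comp σ = f /ₘ g ∧ (f %ₘ g).comp σ = f %ₘ g := by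
  nontriviality R
  have hdeg : ((f %ₘ g).comp σ).degree < g.degree := by
    by_cases hr : f %ₘ g = 0
    · rw [hr, zero_comp, degree_zero, bot_lt_iff_ne_bot, Ne, degree_eq_bot]
      exact hg.ne_zero
    calc ((f %ₘ g).comp σ).degree
        ≤ (f %ₘ g).natDegree := degree_le_of_natDegree_le <|
          natDegree_comp_le.trans (mul_le_of_le_one_right (Nat.zero_le _) hσ)
      _ = (f %ₘ g).degree := (degree_eq_natDegree hr).symm
      _ < g.degree := degree_modByMonic_lt f hg
  have hsum : (f %ₘ g).comp σ + g * (f /ₘ g).comp σ = f := by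
    rw [← hgσ, ← mul_comp, ← add_comp, hgσ, modByMonic_add_div, hfσ]
  obtain ⟨hq, hr⟩ := div_modByMonic_unique _ _ hg ⟨hsum, hdeg⟩
  exact ⟨hq.symm, hr.symm⟩

theorem eq_C_coeff_zero_of_natDegree_le_one_of_comp_neg_X_add_C_eq [IsAddTorsionFree R]
    {r : R[X]} (s : R) (hr : r.natDegree ≤ 1) (h : r.comp (-(X + C s)) = r) :
    r = C (r.coeff 0) := by
  have hlin := eq_X_add_C_of_natDegree_le_one hr
  have hcoeff : -r.coeff 1 = r.coeff 1 := by
    have := congrArg (coeff · 1) h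
    rw [hlin] at this
    simpa using this
  rw [hlin, neg_eq_self.mp hcoeff]
  simp

theorem X_mul_X_add_C_comp_neg_X_add_C (s : R) :
    (X * (X + C s)).comp (-(X + C s)) = X * (X + C s) := by
  simp only [mul_comp, add_comp, X_comp, C_comp]
  ring

theorem exists_eq_comp_X_mul_X_add_C_of_comp_neg_X_add_C_eq [IsAddTorsionFree R] (s : R)
    {f : R[X]} (hf : f.comp (-(X + C s)) = f) : ∃ g : R[X], f = g.comp (X * (X + C s)) := by
  nontriviality R
  set b : R[X] := X * (X + C s) with hb
  have hb_monic : b.Monic := monic_X.mul (monic_X_add_C s)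
  have hb_natDegree : b.natDegree = 2 := by
    rw [hb, monic_X.natDegree_mul (monic_X_add_C s), natDegree_X, natDegree_X_add_C]
  induction hd : f.degree using WellFoundedLT.induction generalizing f with
  | _ d ih =>
  by_cases hf0 : f = 0
  · exact ⟨0, by rw [hf0, zero_comp]⟩
  obtain ⟨hq, hr⟩ := divByMonic_comp_eq_and_modByMonic_comp_eq hb_monic
    (by rw [natDegree_neg, natDegree_X_add_C]) (X_mul_X_add_C_comp_neg_X_add_C s) hf
  have hr_natDegree : (f %ₘ b).natDegree ≤ 1 := by
    have := natDegree_modByMonic_lt f hb_monic (fun h ↦ by simp [h] at hb_natDegree)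
    omega
  have hr_const := eq_C_coeff_zero_of_natDegree_le_one_of_comp_neg_X_add_C_eq s hr_natDegree hr
  have hb_degree_pos : 0 < b.degree := by
    rw [degree_eq_natDegree hb_monic.ne_zero, hb_natDegree]; norm_num
  have hlt : (f /ₘ b).degree < d := hd ▸ degree_divByMonic_lt f b hf0 hb_degree_pos
  obtain ⟨g, hg⟩ := ih _ hlt hq rfl
  refine ⟨C ((f %ₘ b).coeff 0) + X * g, ?_⟩
  conv_lhs => rw [← modByMonic_add_div f b]
  rw [add_comp, mul_comp, X_comp, C_comp, ← hg, ← hr_const]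

end Polynomial

/-- **Granville's theorem.** Identifying `ℤ[x,y,z]` with `ℤ[x,y][z]`:
if `F ∈ ℤ[x,y][z]` is invariant under the substitution
`z ↦ -(x + y + z)`, then `F` is a polynomial in `b = z(x+y+z)` with
coefficients in `ℤ[x,y]`, i.e. `F = G(z(x+y+z))` for some
`G ∈ ℤ[x,y][t]`. -/
theorem granville_invariance
    (F : Polynomial (MvPolynomial (Fin 2) ℤ))
    (hF : Polynomial.aeval
        (-(C (MvPolynomial.X 0) + C (MvPolynomial.X 1) + X)) F = F) :
    ∃ G : Polynomial (MvPolynomial (Fin 2) ℤ),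
      F = Polynomial.aeval
        (X * (C (MvPolynomial.X 0) + C (MvPolynomial.X 1) + X)) G := by
  have hs : C (MvPolynomial.X 0) + C (MvPolynomial.X 1) + X =
      X + C (MvPolynomial.X 0 + MvPolynomial.X 1 : MvPolynomial (Fin 2) ℤ) := by
    rw [C_add]; ring
  rw [hs, ← comp_eq_aeval] at hF
  simp_rw [hs, ← comp_eq_aeval]
  exact exists_eq_comp_X_mul_X_add_C_of_comp_neg_X_add_C_eq _ hF
end

section
/- Let p > 3 be a prime and let e = 2 if p ≡ 1 (mod 6) and e = 1 if p ≡ −1 (mod 6). Then the polynomial p·t·(t+1)·(t²+t+1)^e divides K_p(t) = (t+1)^p − t^p − 1 in ℤ[t]; that is, there exists a polynomial C_p(t) ∈ ℤ[t] (the Cauchy polynomial) of degree p−3−2e with K_p(t) = p·t·(t+1)·(t²+t+1)^e·C_p(t). -/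
open Polynomial

private lemma q_eq_cyclotomic : (X^2 + X + 1 : Polynomial ℤ) = cyclotomic 3 ℤ := by
  have : Fact (Nat.Prime 3) := ⟨by norm_num⟩
  rw [cyclotomic_prime]
  simp [Finset.sum_range_succ]
  ring

private lemma q_prime : Prime (X^2 + X + 1 : Polynomial ℤ) := by
  rw [q_eq_cyclotomic]
  exact (cyclotomic.irreducible (by norm_num)).prime

private lemma q_natDegree : (X^2 + X + 1 : Polynomial ℤ).natDegree = 2 := by
  compute_degree!

private lemma q_not_dvd {f : Polynomial ℤ} (hf : f ≠ 0) (hd : f.natDegree < 2) :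
    ¬ (X^2 + X + 1 : Polynomial ℤ) ∣ f := fun h => by
  have := Polynomial.natDegree_le_of_dvd h hf
  rw [q_natDegree] at this
  omega

/-- For a prime `p > 3`, with `e = 2` if `p ≡ 1 (mod 6)` and `e = 1` if
`p ≡ -1 (mod 6)`, the polynomial `p·t·(t+1)·(t²+t+1)^e` divides
`K_p(t) = (t+1)^p - t^p - 1` in `ℤ[t]`: there is a Cauchy polynomial
`C_p ∈ ℤ[t]` of degree `p - 3 - 2e` with
`K_p = p·t·(t+1)·(t²+t+1)^e·C_p`. -/
theorem cauchy_polynomial_factorization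
    (p : ℕ) (hp : p.Prime) (hp3 : 3 < p)
    (e : ℕ) (he : e = if p % 6 = 1 then 2 else 1) :
    ∃ Cp : Polynomial ℤ, Cp.natDegree = p - 3 - 2 * e ∧
      ((X + 1) ^ p - X ^ p - 1 : Polynomial ℤ) =
        (p : ℤ) • (X * (X + 1) * (X ^ 2 + X + 1) ^ e * Cp) := by
  set K : Polynomial ℤ := (X + 1) ^ p - X ^ p - 1 with hK
  set q : Polynomial ℤ := X ^ 2 + X + 1 with hq
  have hp0 : (p : ℤ) ≠ 0 := by exact_mod_cast hp.ne_zero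
  have hmod : p % 6 = 1 ∨ p % 6 = 5 := by
    have hd2 : ¬ (2 ∣ p) := fun h => by
      rcases (Nat.Prime.eq_one_or_self_of_dvd hp 2 h) with h' | h' <;> omega
    have hd3 : ¬ (3 ∣ p) := fun h => by
      rcases (Nat.Prime.eq_one_or_self_of_dvd hp 3 h) with h' | h' <;> omega
    omega
  have hXone : ((X + 1 : Polynomial ℤ)).Monic := by
    simpa using Polynomial.monic_X_add_C (1 : ℤ)
  have hdegX1p : ((X + 1 : Polynomial ℤ) ^ p).degree = p := by
    rw [Polynomial.degree_pow]
    rw [show ((X : Polynomial ℤ) + 1) = X + C 1 by simp, Polynomial.degree_X_add_C]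
    simp
  have hcoeff : K.coeff (p - 1) = (p : ℤ) := by
    rw [hK]
    simp only [Polynomial.coeff_sub, Polynomial.coeff_X_add_one_pow,
      Polynomial.coeff_X_pow, Polynomial.coeff_one]
    rw [if_neg (by omega : ¬ (p - 1 = p)), if_neg (by omega : ¬ (p - 1 = 0))]
    rw [show p - 1 = p - (p - (p-1)) by omega, Nat.choose_symm (by omega),
      show p - (p-1) = 1 by omega, Nat.choose_one_right]
    ring
  have hKne : K ≠ 0 := fun h => by
    rw [h] at hcoeff; simp at hcoeff; exact hp0 hcoeff.symm
  have hKdeg : K.natDegree = p - 1 := by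
    have hle : K.natDegree ≤ p - 1 := by
      have h1 : ((X + 1) ^ p - X ^ p : Polynomial ℤ).degree < p := by
        have hlt := Polynomial.degree_sub_lt
          (p := ((X + 1) ^ p : Polynomial ℤ)) (q := (X ^ p : Polynomial ℤ))
          (by rw [Polynomial.degree_X_pow, hdegX1p])
          (pow_ne_zero p hXone.ne_zero)
          (by rw [(hXone.pow p).leadingCoeff, (Polynomial.monic_X_pow p).leadingCoeff])
        rwa [hdegX1p] at hlt
      have h2 : K.degree < p := by
        rw [hK]
        calc ((X + 1) ^ p - X ^ p - 1 : Polynomial ℤ).degree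
            ≤ max ((X + 1) ^ p - X ^ p : Polynomial ℤ).degree (1 : Polynomial ℤ).degree :=
              Polynomial.degree_sub_le _ _
          _ < p := by
              rw [max_lt_iff]
              exact ⟨h1, by rw [Polynomial.degree_one]; exact_mod_cast (by omega : (0:ℕ) < p)⟩
      have := (Polynomial.natDegree_lt_iff_degree_lt hKne).mpr (by exact_mod_cast h2)
      omega
    have hge : p - 1 ≤ K.natDegree :=
      Polynomial.le_natDegree_of_ne_zero (by rw [hcoeff]; exact hp0)
    omega
  -- p divides K
  have hpK : (C (p : ℤ)) ∣ K := by
    rw [Polynomial.C_dvd_iff_dvd_coeff]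
    intro n
    rw [hK]
    simp only [Polynomial.coeff_sub, Polynomial.coeff_X_add_one_pow,
      Polynomial.coeff_X_pow, Polynomial.coeff_one]
    rcases eq_or_ne n 0 with h | h
    · subst h
      rw [if_neg (by omega : ¬ (0 = p)), if_pos rfl, Nat.choose_zero_right]
      simp
    rcases eq_or_ne n p with h' | h'
    · subst h'
      rw [if_pos rfl, if_neg h, Nat.choose_self]
      simp
    rcases lt_or_ge n p with h'' | h''
    · rw [if_neg h', if_neg h]
      have := hp.dvd_choose_self h (by omega)
      simpa using (Int.natCast_dvd_natCast.mpr this)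
    · rw [if_neg h', if_neg h, Nat.choose_eq_zero_of_lt (by omega)]
      simp
  -- q-divisibility helpers
  have h6 : q ∣ ((X + 1 : Polynomial ℤ) ^ 6 - 1) :=
    ⟨X^4 + 5*X^3 + 9*X^2 + 6*X, by rw [hq]; ring⟩
  have h3 : q ∣ ((X : Polynomial ℤ) ^ 3 - 1) := ⟨X - 1, by rw [hq]; ring⟩
  have h6m : ∀ m : ℕ, q ∣ ((X + 1 : Polynomial ℤ) ^ (6 * m) - 1) := by
    intro m
    have := sub_dvd_pow_sub_pow ((X + 1 : Polynomial ℤ) ^ 6) 1 m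
    rw [one_pow, ← pow_mul] at this
    exact h6.trans this
  have h3m : ∀ m : ℕ, q ∣ ((X : Polynomial ℤ) ^ (6 * m) - 1) := by
    intro m
    have := sub_dvd_pow_sub_pow ((X : Polynomial ℤ) ^ 3) 1 (2 * m)
    rw [one_pow, ← pow_mul, show 3 * (2 * m) = 6 * m by ring] at this
    exact h3.trans this
  -- q divides K
  have hqK : q ∣ K := by
    rcases hmod with h1 | h5
    · obtain ⟨m, hpm⟩ : ∃ m, p = 6 * m + 1 := ⟨p / 6, by omega⟩
      have e1 : K = (X + 1) * ((X + 1) ^ (6 * m) - 1)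
          - X * (X ^ (6 * m) - 1) := by
        rw [hK, hpm]
        ring
      rw [e1]
      exact dvd_sub ((h6m _).mul_left _) ((h3m _).mul_left _)
    · obtain ⟨m, hpm⟩ : ∃ m, p = 6 * m + 5 := ⟨p / 6, by omega⟩
      have e1 : K = (X + 1) ^ 5 * ((X + 1) ^ (6 * m) - 1)
          - X ^ 5 * (X ^ (6 * m) - 1) + ((X + 1) ^ 5 - X ^ 5 - 1) := by
        rw [hK, hpm]
        ring
      have h5dvd : q ∣ ((X + 1 : Polynomial ℤ) ^ 5 - X ^ 5 - 1) :=
        ⟨5*X^2 + 5*X, by rw [hq]; ring⟩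
      rw [e1]
      exact dvd_add (dvd_sub ((h6m _).mul_left _) ((h3m _).mul_left _)) h5dvd
  have hX1deg : ((X : Polynomial ℤ) + 1).natDegree = 1 := by
    rw [show ((X : Polynomial ℤ) + 1) = X - C (-1) by simp]
    simpa using Polynomial.natDegree_X_sub_C (-1 : ℤ)
  -- factor extraction
  obtain ⟨M, hM⟩ := hpK
  have hCpne : (C (p : ℤ) : Polynomial ℤ) ≠ 0 := by
    simpa using hp0
  have hXK : (X : Polynomial ℤ) ∣ K := by
    rw [Polynomial.X_dvd_iff, hK]
    simp only [Polynomial.coeff_sub, Polynomial.coeff_X_add_one_pow,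
      Polynomial.coeff_X_pow, Polynomial.coeff_one, Nat.choose_zero_right]
    rw [if_neg (by omega : ¬ (0 = p))]
    norm_num
  have hXM : (X : Polynomial ℤ) ∣ M := by
    rcases (Polynomial.prime_X (R := ℤ)).dvd_or_dvd (hM ▸ hXK) with h | h
    · exact absurd h (by rw [Polynomial.X_dvd_iff]; simpa using hp0)
    · exact h
  obtain ⟨M₁, hM₁⟩ := hXM
  -- X + 1
  have hX1eq : (X - C (-1) : Polynomial ℤ) = X + 1 := by simp
  have hX1prime : Prime (X + 1 : Polynomial ℤ) := hX1eq ▸ Polynomial.prime_X_sub_C (-1 : ℤ)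
  have hoddp : Odd p := hp.odd_of_ne_two (by omega)
  have hX1K : (X + 1 : Polynomial ℤ) ∣ K := by
    rw [← hX1eq, Polynomial.dvd_iff_isRoot, Polynomial.IsRoot, hK]
    simp [hoddp.neg_one_pow]
    omega
  have hX1nC : ¬ (X + 1 : Polynomial ℤ) ∣ C (p : ℤ) := fun h => by
    have := Polynomial.natDegree_le_of_dvd h hCpne
    rw [Polynomial.natDegree_C, hX1deg] at this
    omega
  have hX1nX : ¬ (X + 1 : Polynomial ℤ) ∣ (X : Polynomial ℤ) := fun h => by
    rw [← hX1eq, Polynomial.dvd_iff_isRoot] at h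
    simp [Polynomial.IsRoot] at h
  have hX1M₁ : (X + 1 : Polynomial ℤ) ∣ M₁ := by
    have hd : (X + 1 : Polynomial ℤ) ∣ C (p:ℤ) * (X * M₁) := by
      rw [← hM₁, ← hM]; exact hX1K
    rcases hX1prime.dvd_or_dvd hd with h | h
    · exact absurd h hX1nC
    rcases hX1prime.dvd_or_dvd h with h' | h'
    · exact absurd h' hX1nX
    · exact h'
  obtain ⟨M₂, hM₂⟩ := hX1M₁
  -- q
  have hqnC : ¬ q ∣ C (p : ℤ) := q_not_dvd hCpne (by rw [Polynomial.natDegree_C]; omega)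
  have hqnX : ¬ q ∣ (X : Polynomial ℤ) := q_not_dvd Polynomial.X_ne_zero
    (by rw [Polynomial.natDegree_X]; omega)
  have hqnX1 : ¬ q ∣ (X + 1 : Polynomial ℤ) := q_not_dvd hXone.ne_zero
    (by rw [hX1deg]; omega)
  have hqdvd_of : ∀ N : Polynomial ℤ, q ∣ C (p:ℤ) * (X * ((X + 1) * N)) → q ∣ N := by
    intro N h
    rcases q_prime.dvd_or_dvd h with h | h
    · exact absurd h hqnC
    rcases q_prime.dvd_or_dvd h with h | h
    · exact absurd h hqnX
    rcases q_prime.dvd_or_dvd h with h | h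
    · exact absurd h hqnX1
    · exact h
  have hKfact : K = C (p:ℤ) * (X * ((X + 1) * M₂)) := by rw [hM, hM₁, hM₂]
  have hqM₂ : q ∣ M₂ := hqdvd_of M₂ (hKfact ▸ hqK)
  obtain ⟨M₃, hM₃⟩ := hqM₂
  -- finish by cases on e
  rcases hmod with h1 | h5
  swap
  · -- e = 1
    have he1 : e = 1 := by rw [he, if_neg (by omega)]
    subst he1
    refine ⟨M₃, ?_, ?_⟩
    · have hM₃ne : M₃ ≠ 0 := fun h => by
        apply hKne
        rw [hKfact, hM₃, h]
        ring
      have : K.natDegree = (C (p:ℤ)).natDegree + ((X : Polynomial ℤ).natDegree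
          + (((X:Polynomial ℤ) + 1).natDegree + (q.natDegree + M₃.natDegree))) := by
        rw [hKfact, hM₃]
        rw [Polynomial.natDegree_mul hCpne (by
          exact mul_ne_zero Polynomial.X_ne_zero (mul_ne_zero hXone.ne_zero
            (mul_ne_zero q_prime.ne_zero hM₃ne)))]
        rw [Polynomial.natDegree_mul Polynomial.X_ne_zero (mul_ne_zero hXone.ne_zero
            (mul_ne_zero q_prime.ne_zero hM₃ne))]
        rw [Polynomial.natDegree_mul hXone.ne_zero (mul_ne_zero q_prime.ne_zero hM₃ne)]
        rw [Polynomial.natDegree_mul q_prime.ne_zero hM₃ne]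
      rw [hKdeg, Polynomial.natDegree_C, Polynomial.natDegree_X] at this
      rw [hX1deg, hq, q_natDegree] at this
      omega
    · rw [Polynomial.smul_eq_C_mul, hKfact, hM₃]
      ring
  · -- e = 2
    have he2 : e = 2 := by rw [he, if_pos h1]
    subst he2
    -- q divides derivative K
    have hdK : derivative K = C (p:ℤ) * ((X + 1) ^ (p - 1) - X ^ (p - 1)) := by
      rw [hK]
      simp only [Polynomial.derivative_sub, Polynomial.derivative_one,
        Polynomial.derivative_pow, Polynomial.derivative_add, Polynomial.derivative_X,
        Polynomial.derivative_one]
      ring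
    have hqdK : q ∣ derivative K := by
      have hpm : p - 1 = 6 * (p / 6) := by omega
      rw [hdK, hpm]
      have : C (p:ℤ) * ((X + 1 : Polynomial ℤ) ^ (6 * (p / 6)) - X ^ (6 * (p / 6)))
          = C (p:ℤ) * ((X + 1) ^ (6 * (p / 6)) - 1) - C (p:ℤ) * (X ^ (6 * (p / 6)) - 1) := by
        ring
      rw [this]
      exact dvd_sub ((h6m _).mul_left _) ((h3m _).mul_left _)
    -- K = q * A with A = C p * (X * ((X+1) * M₃))
    have hdq : derivative q = C 2 * X + 1 := by
      rw [hq]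
      simp
    have hqdq : ¬ q ∣ derivative q := by
      rw [hdq]
      refine q_not_dvd ?_ ?_
      · intro h
        have := congrArg (Polynomial.eval 0) h
        simp at this
      · have : ((C 2 : Polynomial ℤ) * X + 1).natDegree ≤ 1 := by
          compute_degree
        omega
    have hqA : ∀ A : Polynomial ℤ, K = q * A → q ∣ A := by
      intro A hKqA
      have h1' : q ∣ derivative q * A + q * derivative A := by
        have h2 : derivative q * A + q * derivative A = derivative K := by
          rw [hKqA, Polynomial.derivative_mul]
        rw [h2]; exact hqdK
      have h2' : q ∣ derivative q * A := (dvd_add_right (Dvd.intro _ rfl)).mp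
        (by rwa [add_comm] at h1')
      rcases q_prime.dvd_or_dvd h2' with h | h
      · exact absurd h hqdq
      · exact h
    have hqM₃ : q ∣ M₃ := hqdvd_of M₃ (hqA _ (by rw [hKfact, hM₃]; ring))
    obtain ⟨M₄, hM₄⟩ := hqM₃
    refine ⟨M₄, ?_, ?_⟩
    · have hM₄ne : M₄ ≠ 0 := fun h => by
        apply hKne
        rw [hKfact, hM₃, hM₄, h]
        ring
      have : K.natDegree = (C (p:ℤ)).natDegree + ((X : Polynomial ℤ).natDegree
          + (((X:Polynomial ℤ) + 1).natDegree + ((q^2).natDegree + M₄.natDegree))) := by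
        rw [hKfact, hM₃, hM₄, show (X+1) * (q * (q * M₄)) = (X+1) * (q^2 * M₄) by ring]
        rw [Polynomial.natDegree_mul hCpne (by
          exact mul_ne_zero Polynomial.X_ne_zero (mul_ne_zero hXone.ne_zero
            (mul_ne_zero (pow_ne_zero 2 q_prime.ne_zero) hM₄ne)))]
        rw [Polynomial.natDegree_mul Polynomial.X_ne_zero (mul_ne_zero hXone.ne_zero
            (mul_ne_zero (pow_ne_zero 2 q_prime.ne_zero) hM₄ne))]
        rw [Polynomial.natDegree_mul hXone.ne_zero
          (mul_ne_zero (pow_ne_zero 2 q_prime.ne_zero) hM₄ne)]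
        rw [Polynomial.natDegree_mul (pow_ne_zero 2 q_prime.ne_zero) hM₄ne]
      rw [hKdeg, Polynomial.natDegree_C, Polynomial.natDegree_X] at this
      rw [hX1deg] at this
      rw [show (q^2).natDegree = 4 by
        rw [Polynomial.natDegree_pow, hq, q_natDegree]] at this
      omega
    · rw [Polynomial.smul_eq_C_mul, hKfact, hM₃, hM₄]
      ring
end

section
/- Let p > 3 be prime. Then there exists a polynomial Q ∈ ℤ[x,y,z] such that x·y·((x+y+z)^p − x^p − y^p − z^p) − (y+z)·(z+x)·((x+y)^p − x^p − y^p) = p·x·y·z·(x+y)·(y+z)·(z+x)·Q. (Equivalently, the integer polynomial E₃ = ((x+y+z)^p − x^p − y^p − z^p)/(p(x+y)(y+z)(z+x)) differs from E₂ = ((x+y)^p − x^p − y^p)/(p·x·y·(x+y)) by a polynomial in ℤ[x,y,z] all of whose terms are multiples of z.) -/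
/-!
With `D₂(a, b) = (a+b)^p - a^p - b^p` and `D₃(a, b, c) = (a+b+c)^p - a^p - b^p - c^p` the
left-hand side is `L = ab·D₃(a, b, c) - (b+c)(c+a)·D₂(a, b)`, and each of the seven factors on
the right divides `L`: `p` divides `D₂` and `D₃` by the binomial theorem; `a`, `b` and, `p`
being odd, `a+b` divide `D₂`, while `D₃` is divisible by `a+b`, `b+c` and `c+a` by oddness and
symmetry; finally `L = ab·D₂(a+b, c) - c(a+b+c)·D₂(a, b)` is divisible by `c`.
In `ℤ[x,y,z]` the factors other than `p` are primes, and each one fails to divide the product of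
those before it, as evaluation at a point where it vanishes and the others do not shows; so the
whole product divides `L`.
-/

open MvPolynomial

theorem Prime.mul_dvd_of_dvd_of_not_dvd {α : Type*} [CommMonoidWithZero α] [IsCancelMulZero α]
    {q a c : α} (hq : Prime q) (ha : a ∣ c) (hqc : q ∣ c) (hqa : ¬ q ∣ a) :
    a * q ∣ c := by
  obtain ⟨k, rfl⟩ := ha
  exact mul_dvd_mul_left a ((hq.dvd_or_dvd hqc).resolve_left hqa)

theorem not_dvd_of_map_eq_zero {α β : Type*} [CommSemiring α] [CommSemiring β]
    (φ : α →+* β) {f g : α} (hf : φ f = 0) (hg : φ g ≠ 0) : ¬ f ∣ g := fun h =>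
  hg (zero_dvd_iff.mp (hf ▸ map_dvd φ h))

theorem MvPolynomial.prime_X_add_X {σ R : Type*} [CommRing R] [IsDomain R] [DecidableEq σ]
    {i j : σ} (hij : i ≠ j) : Prime (X i + X j : MvPolynomial σ R) := by
  have shear_comp (s t : R) (h : s + t = 0) :
      (aeval (Function.update X i (X i + C s * X j))).comp
        (aeval (Function.update X i (X i + C t * X j))) = AlgHom.id R (MvPolynomial σ R) := by
    refine algHom_ext fun k => ?_
    rcases eq_or_ne k i with rfl | hk
    · simp only [aeval_eq_bind₁, AlgHom.coe_comp, Function.comp_apply, bind₁_X_right,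
        Function.update_self, map_add, map_mul, algHom_C, algebraMap_eq,
        Function.update_of_ne hij.symm, AlgHom.coe_id, id_eq]
      rw [add_assoc, ← add_mul, ← C_add, h, map_zero, zero_mul, add_zero]
    · simp [hk]
  let e : MvPolynomial σ R ≃ₐ[R] MvPolynomial σ R :=
    AlgEquiv.ofAlgHom _ _ (shear_comp 1 (-1) (by ring)) (shear_comp (-1) 1 (by ring))
  have he : e (X i) = X i + X j := by simp [e]
  rw [← he, MulEquiv.prime_iff]
  exact X_prime

section PowSumDefect

variable {R : Type*} [CommRing R] {n : ℕ}

def powSumDefect₂ (n : ℕ) (a b : R) : R := (a + b) ^ n - a ^ n - b ^ n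

def powSumDefect₃ (n : ℕ) (a b c : R) : R := (a + b + c) ^ n - a ^ n - b ^ n - c ^ n

/-- The numerator of `E₃ - E₂` over the common denominator `n·a·b·(a+b)·(b+c)·(c+a)`. -/
def e3SubE2Numerator (n : ℕ) (a b c : R) : R :=
  a * b * powSumDefect₃ n a b c - (b + c) * (c + a) * powSumDefect₂ n a b

theorem powSumDefect₂_comm (n : ℕ) (a b : R) :
    powSumDefect₂ n a b = powSumDefect₂ n b a := by
  unfold powSumDefect₂; ring

theorem powSumDefect₃_eq (n : ℕ) (a b c : R) :
    powSumDefect₃ n a b c = powSumDefect₂ n (a + b) c + powSumDefect₂ n a b := by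
  unfold powSumDefect₂ powSumDefect₃; ring

theorem powSumDefect₃_rotate (n : ℕ) (a b c : R) :
    powSumDefect₃ n a b c = powSumDefect₃ n b c a := by
  unfold powSumDefect₃; ring

theorem dvd_powSumDefect₂ (hn : n ≠ 0) (a b : R) : a ∣ powSumDefect₂ n a b := by
  have h := sub_dvd_pow_sub_pow (a + b) b n
  rw [add_sub_cancel_right] at h
  rw [powSumDefect₂, sub_right_comm]
  exact dvd_sub h (dvd_pow_self a hn)

theorem Odd.add_dvd_powSumDefect₂ (hn : Odd n) (a b : R) : a + b ∣ powSumDefect₂ n a b := by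
  rw [powSumDefect₂, sub_sub]
  exact dvd_sub (dvd_pow_self _ hn.pos.ne') (hn.add_dvd_pow_add_pow a b)

theorem natCast_dvd_powSumDefect₂ (hn : n.Prime) (a b : R) :
    (n : R) ∣ powSumDefect₂ n a b := by
  obtain ⟨r, hr⟩ := exists_add_pow_prime_eq hn a b
  exact ⟨a * b * r, by rw [powSumDefect₂, hr]; ring⟩

theorem Odd.add_dvd_powSumDefect₃ (hn : Odd n) (a b c : R) :
    a + b ∣ powSumDefect₃ n a b c := by
  rw [powSumDefect₃_eq]
  exact dvd_add (dvd_powSumDefect₂ hn.pos.ne' _ _) (hn.add_dvd_powSumDefect₂ a b)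

theorem natCast_dvd_powSumDefect₃ (hn : n.Prime) (a b c : R) :
    (n : R) ∣ powSumDefect₃ n a b c := by
  rw [powSumDefect₃_eq]
  exact dvd_add (natCast_dvd_powSumDefect₂ hn _ _) (natCast_dvd_powSumDefect₂ hn _ _)

theorem e3SubE2Numerator_eq (n : ℕ) (a b c : R) :
    e3SubE2Numerator n a b c =
      a * b * powSumDefect₂ n (a + b) c - c * (a + b + c) * powSumDefect₂ n a b := by
  rw [e3SubE2Numerator, powSumDefect₃_eq]; ring

theorem natCast_dvd_e3SubE2Numerator (hn : n.Prime) (a b c : R) :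
    (n : R) ∣ e3SubE2Numerator n a b c :=
  dvd_sub (dvd_mul_of_dvd_right (natCast_dvd_powSumDefect₃ hn a b c) _)
    (dvd_mul_of_dvd_right (natCast_dvd_powSumDefect₂ hn a b) _)

theorem left_dvd_e3SubE2Numerator (hn : n ≠ 0) (a b c : R) : a ∣ e3SubE2Numerator n a b c :=
  dvd_sub (dvd_mul_of_dvd_left (dvd_mul_right a b) _)
    (dvd_mul_of_dvd_right (dvd_powSumDefect₂ hn a b) _)

theorem middle_dvd_e3SubE2Numerator (hn : n ≠ 0) (a b c : R) : b ∣ e3SubE2Numerator n a b c :=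
  dvd_sub (dvd_mul_of_dvd_left (dvd_mul_left b a) _)
    (dvd_mul_of_dvd_right (powSumDefect₂_comm n a b ▸ dvd_powSumDefect₂ hn b a) _)

theorem right_dvd_e3SubE2Numerator (hn : n ≠ 0) (a b c : R) : c ∣ e3SubE2Numerator n a b c := by
  rw [e3SubE2Numerator_eq, powSumDefect₂_comm n (a + b)]
  exact dvd_sub (dvd_mul_of_dvd_right (dvd_powSumDefect₂ hn c _) _)
    (dvd_mul_of_dvd_left (dvd_mul_right c _) _)

theorem Odd.left_add_middle_dvd_e3SubE2Numerator (hn : Odd n) (a b c : R) :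
    a + b ∣ e3SubE2Numerator n a b c :=
  dvd_sub (dvd_mul_of_dvd_right (hn.add_dvd_powSumDefect₃ a b c) _)
    (dvd_mul_of_dvd_right (hn.add_dvd_powSumDefect₂ a b) _)

theorem Odd.middle_add_right_dvd_e3SubE2Numerator (hn : Odd n) (a b c : R) :
    b + c ∣ e3SubE2Numerator n a b c :=
  dvd_sub
    (dvd_mul_of_dvd_right (powSumDefect₃_rotate n a b c ▸ hn.add_dvd_powSumDefect₃ b c a) _)
    (dvd_mul_of_dvd_left (dvd_mul_right _ _) _)

theorem Odd.right_add_left_dvd_e3SubE2Numerator (hn : Odd n) (a b c : R) :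
    c + a ∣ e3SubE2Numerator n a b c := by
  refine dvd_sub (dvd_mul_of_dvd_right ?_ _) (dvd_mul_of_dvd_left (dvd_mul_left _ _) _)
  rw [powSumDefect₃_rotate, powSumDefect₃_rotate]
  exact hn.add_dvd_powSumDefect₃ c a b

end PowSumDefect

/-- For a prime `p > 3`, there is `Q ∈ ℤ[x,y,z]` with
`x·y·((x+y+z)^p - x^p - y^p - z^p) - (y+z)·(z+x)·((x+y)^p - x^p - y^p)
  = p·x·y·z·(x+y)·(y+z)·(z+x)·Q`;
equivalently `E₃ - E₂ ∈ z·ℤ[x,y,z]`. -/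
theorem E3_minus_E2_multiple_of_z
    (p : ℕ) (hp : p.Prime) (hp3 : 3 < p) :
    ∃ Q : MvPolynomial (Fin 3) ℤ,
      X 0 * X 1 * ((X 0 + X 1 + X 2) ^ p - X 0 ^ p - X 1 ^ p - X 2 ^ p) -
          (X 1 + X 2) * (X 2 + X 0) * ((X 0 + X 1) ^ p - X 0 ^ p - X 1 ^ p) =
        (p : MvPolynomial (Fin 3) ℤ) * X 0 * X 1 * X 2 *
          (X 0 + X 1) * (X 1 + X 2) * (X 2 + X 0) * Q := by
  have hodd : Odd p := hp.odd_of_ne_two (by omega)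
  have h₁ := X_prime.mul_dvd_of_dvd_of_not_dvd
    (natCast_dvd_e3SubE2Numerator hp (X 0) (X 1) (X 2))
    (left_dvd_e3SubE2Numerator hp.ne_zero (X 0) (X 1) (X 2))
    (not_dvd_of_map_eq_zero (eval (![0, 1, 1] : Fin 3 → ℤ)) (by simp) (by simp [hp.ne_zero]))
  have h₂ := X_prime.mul_dvd_of_dvd_of_not_dvd h₁
    (middle_dvd_e3SubE2Numerator hp.ne_zero (X 0) (X 1) (X 2))
    (not_dvd_of_map_eq_zero (eval (![1, 0, 1] : Fin 3 → ℤ)) (by simp) (by simp [hp.ne_zero]))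
  have h₃ := X_prime.mul_dvd_of_dvd_of_not_dvd h₂
    (right_dvd_e3SubE2Numerator hp.ne_zero (X 0) (X 1) (X 2))
    (not_dvd_of_map_eq_zero (eval (![1, 1, 0] : Fin 3 → ℤ)) (by simp) (by simp [hp.ne_zero]))
  have h₄ := (prime_X_add_X (by decide)).mul_dvd_of_dvd_of_not_dvd h₃
    (hodd.left_add_middle_dvd_e3SubE2Numerator (X 0) (X 1) (X 2))
    (not_dvd_of_map_eq_zero (eval (![1, -1, 1] : Fin 3 → ℤ)) (by simp) (by simp [hp.ne_zero]))
  have h₅ := (prime_X_add_X (by decide)).mul_dvd_of_dvd_of_not_dvd h₄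
    (hodd.middle_add_right_dvd_e3SubE2Numerator (X 0) (X 1) (X 2))
    (not_dvd_of_map_eq_zero (eval (![1, 1, -1] : Fin 3 → ℤ)) (by simp) (by simp [hp.ne_zero]))
  exact (prime_X_add_X (by decide)).mul_dvd_of_dvd_of_not_dvd h₅
    (hodd.right_add_left_dvd_e3SubE2Numerator (X 0) (X 1) (X 2))
    (not_dvd_of_map_eq_zero (eval (![1, 2, -1] : Fin 3 → ℤ)) (by simp) (by simp [hp.ne_zero]))
end

section
/- (Catalan) Let n > 3 be an odd integer. Then in ℤ[x,y,z] one has the identity (x+y+z)^n − x^n − y^n − z^n = (x+y)(y+z)(z+x) · ( Σ_{m=0}^{n−3} H_m(x,y,z)·(x+y+z)^{n−3−m} + 2·H_{(n−3)/2}(x², y², z²) ). -/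
open MvPolynomial

/-- `H_m(x,y,z) = Σ_{j+k+l=m} x^j y^k z^l`, the complete homogeneous
polynomial of degree `m` in three variables with all coefficients `1`. -/
noncomputable def catalanH (m : ℕ) : MvPolynomial (Fin 3) ℤ :=
  ∑ j ∈ Finset.range (m + 1), ∑ k ∈ Finset.range (m + 1 - j),
    X 0 ^ j * X 1 ^ k * X 2 ^ (m - j - k)

noncomputable def catG (r : ℕ) : MvPolynomial (Fin 3) ℤ :=
  ∑ j ∈ Finset.range (r + 1), X 0 ^ j * X 1 ^ (r - j)

lemma catG_succ (r : ℕ) : catG (r + 1) = X 1 * catG r + X 0 ^ (r + 1) := by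
  unfold catG
  rw [Finset.sum_range_succ, Finset.mul_sum]
  congr 1
  · apply Finset.sum_congr rfl
    intro j hj
    have hj' : j < r + 1 := Finset.mem_range.mp hj
    have : r + 1 - j = (r - j) + 1 := by omega
    rw [this, pow_succ]
    ring
  · simp

lemma catH_succ (m : ℕ) : catalanH (m + 1) = X 2 * catalanH m + catG (m + 1) := by
  unfold catalanH catG
  have key : ∀ j ∈ Finset.range (m + 2),
      (∑ k ∈ Finset.range (m + 1 + 1 - j), X 0 ^ j * X 1 ^ k * (X 2 : MvPolynomial (Fin 3) ℤ) ^ (m + 1 - j - k))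
      = (∑ k ∈ Finset.range (m + 1 - j), X 0 ^ j * X 1 ^ k * X 2 ^ (m + 1 - j - k))
        + X 0 ^ j * X 1 ^ (m + 1 - j) := by
    intro j hj
    have hj' : j < m + 2 := Finset.mem_range.mp hj
    have h1 : m + 1 + 1 - j = (m + 1 - j) + 1 := by omega
    rw [h1, Finset.sum_range_succ]
    have : m + 1 - j - (m + 1 - j) = 0 := by omega
    rw [this, pow_zero, mul_one]
  rw [Finset.sum_congr rfl key, Finset.sum_add_distrib]
  congr 1
  · rw [Finset.sum_range_succ]
    have hempty : (∑ k ∈ Finset.range (m + 1 - (m+1)), X 0 ^ (m+1) * X 1 ^ k * (X 2 : MvPolynomial (Fin 3) ℤ) ^ (m + 1 - (m+1) - k)) = 0 := by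
      simp
    rw [hempty, add_zero, Finset.mul_sum]
    apply Finset.sum_congr rfl
    intro j hj
    have hj' : j < m + 1 := Finset.mem_range.mp hj
    rw [Finset.mul_sum]
    apply Finset.sum_congr rfl
    intro k hk
    have hk' : k < m + 1 - j := Finset.mem_range.mp hk
    have : m + 1 - j - k = (m - j - k) + 1 := by omega
    rw [this, pow_succ]
    ring

lemma catH_rec (m : ℕ) :
    catalanH (m + 3) = (X 0 + X 1 + X 2) * catalanH (m + 2)
      - (X 0 * X 1 + X 1 * X 2 + X 2 * X 0) * catalanH (m + 1)
      + (X 0 * X 1 * X 2) * catalanH m := by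
  have h1 := catH_succ m
  have h2 : catalanH (m + 2) = X 2 * catalanH (m + 1) + catG (m + 2) := catH_succ (m + 1)
  have h3 : catalanH (m + 3) = X 2 * catalanH (m + 2) + catG (m + 3) := catH_succ (m + 2)
  have g2 : catG (m + 2) = X 1 * catG (m + 1) + X 0 ^ (m + 2) := catG_succ (m + 1)
  have g3 : catG (m + 3) = X 1 * catG (m + 2) + X 0 ^ (m + 3) := catG_succ (m + 2)
  rw [h3, h2, h1, g3, g2]
  ring

lemma lem2 (N : ℕ) :
    (X 0 + X 1) * (X 1 + X 2) * (X 2 + X 0) *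
        (∑ m ∈ Finset.range (N + 1), catalanH m * (X 0 + X 1 + X 2) ^ (N - m))
      = (X 0 + X 1 + X 2) ^ (N + 3) - catalanH (N + 3)
        - (X 0 * X 1 + X 1 * X 2 + X 2 * X 0) * catalanH (N + 1) := by
  induction N with
  | zero =>
      simp [catalanH, Finset.sum_range_succ]
      ring
  | succ N ih =>
      rw [Finset.sum_range_succ]
      have hs : (∑ m ∈ Finset.range (N + 1), catalanH m * (X 0 + X 1 + X 2 : MvPolynomial (Fin 3) ℤ) ^ (N + 1 - m))
          = (X 0 + X 1 + X 2) * ∑ m ∈ Finset.range (N + 1), catalanH m * (X 0 + X 1 + X 2) ^ (N - m) := by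
        rw [Finset.mul_sum]
        apply Finset.sum_congr rfl
        intro m hm
        have hm' : m < N + 1 := Finset.mem_range.mp hm
        have : N + 1 - m = (N - m) + 1 := by omega
        rw [this, pow_succ]
        ring
      rw [hs]
      have hr : catalanH (N + 4) = (X 0 + X 1 + X 2) * catalanH (N + 3)
          - (X 0 * X 1 + X 1 * X 2 + X 2 * X 0) * catalanH (N + 2)
          + (X 0 * X 1 * X 2) * catalanH (N + 1) := catH_rec (N + 1)
      have e1 : N + 1 + 3 = N + 4 := by omega
      have e2 : N + 1 - (N + 1) = 0 := by omega
      rw [e1, e2]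
      linear_combination (X 0 + X 1 + X 2 : MvPolynomial (Fin 3) ℤ) * ih + hr

lemma catH_rec2 (m : ℕ) :
    catalanH (m + 6) = (X 0 ^ 2 + X 1 ^ 2 + X 2 ^ 2) * catalanH (m + 4)
      - (X 0 ^ 2 * X 1 ^ 2 + X 1 ^ 2 * X 2 ^ 2 + X 2 ^ 2 * X 0 ^ 2) * catalanH (m + 2)
      + (X 0 * X 1 * X 2) ^ 2 * catalanH m := by
  have r0 := catH_rec m
  have r1 : catalanH (m + 4) = (X 0 + X 1 + X 2) * catalanH (m + 3)
      - (X 0 * X 1 + X 1 * X 2 + X 2 * X 0) * catalanH (m + 2)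
      + (X 0 * X 1 * X 2) * catalanH (m + 1) := catH_rec (m + 1)
  have r2 : catalanH (m + 5) = (X 0 + X 1 + X 2) * catalanH (m + 4)
      - (X 0 * X 1 + X 1 * X 2 + X 2 * X 0) * catalanH (m + 3)
      + (X 0 * X 1 * X 2) * catalanH (m + 2) := catH_rec (m + 2)
  have r3 : catalanH (m + 6) = (X 0 + X 1 + X 2) * catalanH (m + 5)
      - (X 0 * X 1 + X 1 * X 2 + X 2 * X 0) * catalanH (m + 4)
      + (X 0 * X 1 * X 2) * catalanH (m + 3) := catH_rec (m + 3)
  linear_combination r3 + (X 0 + X 1 + X 2 : MvPolynomial (Fin 3) ℤ) * r2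
    + (X 0 * X 1 + X 1 * X 2 + X 2 * X 0 : MvPolynomial (Fin 3) ℤ) * r1
    + (X 0 * X 1 * X 2 : MvPolynomial (Fin 3) ℤ) * r0

lemma bindH_rec (q : ℕ) :
    bind₁ (![X 0 ^ 2, X 1 ^ 2, X 2 ^ 2] : Fin 3 → MvPolynomial (Fin 3) ℤ) (catalanH (q + 3))
      = (X 0 ^ 2 + X 1 ^ 2 + X 2 ^ 2) * bind₁ ![X 0 ^ 2, X 1 ^ 2, X 2 ^ 2] (catalanH (q + 2))
      - (X 0 ^ 2 * X 1 ^ 2 + X 1 ^ 2 * X 2 ^ 2 + X 2 ^ 2 * X 0 ^ 2) *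
          bind₁ ![X 0 ^ 2, X 1 ^ 2, X 2 ^ 2] (catalanH (q + 1))
      + (X 0 * X 1 * X 2) ^ 2 * bind₁ ![X 0 ^ 2, X 1 ^ 2, X 2 ^ 2] (catalanH q) := by
  rw [catH_rec q]
  simp only [map_add, map_sub, map_mul, bind₁_X_right, Matrix.cons_val_zero, Matrix.cons_val_one,
    Matrix.head_cons, Matrix.cons_val_two, Matrix.tail_cons]
  ring

set_option maxHeartbeats 1600000 in
lemma lem3 : ∀ q : ℕ,
    catalanH (2*q+3) + (X 0 * X 1 + X 1 * X 2 + X 2 * X 0) * catalanH (2*q+1)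
      - (X 0 ^ (2*q+3) + X 1 ^ (2*q+3) + X 2 ^ (2*q+3))
    = 2 * ((X 0 + X 1) * (X 1 + X 2) * (X 2 + X 0)) *
        bind₁ ![X 0 ^ 2, X 1 ^ 2, X 2 ^ 2] (catalanH q) := by
  intro q
  induction q using Nat.strong_induction_on with
  | _ q ih =>
    rcases q with _ | _ | _ | k
    · simp [catalanH, Finset.sum_range_succ]; ring
    · simp [catalanH, Finset.sum_range_succ]; ring
    · simp [catalanH, Finset.sum_range_succ]; ring
    · have ih0 := ih k (by omega)
      have ih1 := ih (k+1) (by omega)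
      have ih2 := ih (k+2) (by omega)
      simp only [show 2*(k+1)+3 = 2*k+5 from by ring, show 2*(k+1)+1 = 2*k+3 from by ring] at ih1
      simp only [show 2*(k+2)+3 = 2*k+7 from by ring, show 2*(k+2)+1 = 2*k+5 from by ring] at ih2
      simp only [show 2*(k+1+1+1)+3 = 2*k+9 from by ring, show 2*(k+1+1+1)+1 = 2*k+7 from by ring,
        show k+1+1+1 = k+3 from rfl]
      have A : catalanH (2*k+9) = (X 0 ^ 2 + X 1 ^ 2 + X 2 ^ 2) * catalanH (2*k+7)
          - (X 0 ^ 2 * X 1 ^ 2 + X 1 ^ 2 * X 2 ^ 2 + X 2 ^ 2 * X 0 ^ 2) * catalanH (2*k+5)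
          + (X 0 * X 1 * X 2) ^ 2 * catalanH (2*k+3) := catH_rec2 (2*k+3)
      have B : catalanH (2*k+7) = (X 0 ^ 2 + X 1 ^ 2 + X 2 ^ 2) * catalanH (2*k+5)
          - (X 0 ^ 2 * X 1 ^ 2 + X 1 ^ 2 * X 2 ^ 2 + X 2 ^ 2 * X 0 ^ 2) * catalanH (2*k+3)
          + (X 0 * X 1 * X 2) ^ 2 * catalanH (2*k+1) := catH_rec2 (2*k+1)
      have C := bindH_rec k
      linear_combination A + (X 0 * X 1 + X 1 * X 2 + X 2 * X 0 : MvPolynomial (Fin 3) ℤ) * B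
        + (X 0 ^ 2 + X 1 ^ 2 + X 2 ^ 2 : MvPolynomial (Fin 3) ℤ) * ih2
        - (X 0 ^ 2 * X 1 ^ 2 + X 1 ^ 2 * X 2 ^ 2 + X 2 ^ 2 * X 0 ^ 2 : MvPolynomial (Fin 3) ℤ) * ih1
        + ((X 0 * X 1 * X 2 : MvPolynomial (Fin 3) ℤ)) ^ 2 * ih0
        - ((2 * ((X 0 + X 1) * (X 1 + X 2) * (X 2 + X 0)) : MvPolynomial (Fin 3) ℤ)) * C
/-- **Catalan's identity.** For odd `n > 3`, in `ℤ[x,y,z]`: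
`(x+y+z)^n - x^n - y^n - z^n
  = (x+y)(y+z)(z+x)·(Σ_{m=0}^{n-3} H_m(x,y,z)·(x+y+z)^{n-3-m}
      + 2·H_{(n-3)/2}(x²,y²,z²))`. -/
theorem catalan_identity
    (n : ℕ) (hodd : Odd n) (hn : 3 < n) :
    ((X 0 + X 1 + X 2) ^ n - X 0 ^ n - X 1 ^ n - X 2 ^ n : MvPolynomial (Fin 3) ℤ) =
      (X 0 + X 1) * (X 1 + X 2) * (X 2 + X 0) *
        ((∑ m ∈ Finset.range (n - 2), catalanH m * (X 0 + X 1 + X 2) ^ (n - 3 - m)) +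
          2 * MvPolynomial.bind₁ ![X 0 ^ 2, X 1 ^ 2, X 2 ^ 2] (catalanH ((n - 3) / 2))) := by

  have hodd' : n % 2 = 1 := Nat.odd_iff.mp hodd
  obtain ⟨t, ht⟩ : ∃ t, n = 2 * t + 3 := ⟨(n - 3) / 2, by omega⟩
  subst ht
  simp only [show 2*t+3-2 = 2*t+1 from by omega, show 2*t+3-3 = 2*t from by omega,
    show 2*t/2 = t from by omega]
  have h2 := lem2 (2*t)
  have h3 := lem3 t
  linear_combination h3 - h2
end
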